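/- arXiv:2312.00418 — 4 statements merged into one kernel-verified Lean document; each statement's English description precedes it below -/
import Mathlib

section
/- Let G be a connected claw-free cubic multigraph. Then any two distinct diamonds in G are vertex-disjoint, unless G is isomorphic to K4. -/
/-- A multigraph on vertex set `V`: a symmetric edge-multiplicity function with no loops. -/
structure Multigraph (V : Type*) where
  mult : V → V → ℕ
  symm : ∀ u v, mult u v = mult v u
  loopless : ∀ v, mult v v = 0

namespace Multigraph

variable {V : Type*}

/-- Adjacency: distinct vertices joined by at least one edge. -/
def Adj (G : Multigraph V) (u v : V) : Prop := u ≠ v ∧ 0 < G.mult u v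

/-- The underlying simple graph. -/
def toSimple (G : Multigraph V) : SimpleGraph V where
  Adj u v := u ≠ v ∧ 0 < G.mult u v
  symm := ⟨fun u v h => ⟨h.1.symm, by rw [G.symm v u]; exact h.2⟩⟩
  loopless := ⟨fun v h => h.1 rfl⟩

def Connected (G : Multigraph V) : Prop := G.toSimple.Connected

section Fin
variable [Fintype V] [DecidableEq V]

/-- The degree of a vertex, counting edge multiplicities. -/
def degree (G : Multigraph V) (v : V) : ℕ := ∑ u, G.mult v u

def IsCubic (G : Multigraph V) : Prop := ∀ v, G.degree v = 3

end Fin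

variable [DecidableEq V]

/-- No induced claw `K_{1,3}` (centre `c`, leaves `a b d`). -/
def IsClawFree (G : Multigraph V) : Prop :=
  ¬ ∃ c a b d : V, c ≠ a ∧ c ≠ b ∧ c ≠ d ∧ a ≠ b ∧ a ≠ d ∧ b ≠ d ∧
      G.mult c a = 1 ∧ G.mult c b = 1 ∧ G.mult c d = 1 ∧
      G.mult a b = 0 ∧ G.mult a d = 0 ∧ G.mult b d = 0

/-- An induced triangle (cycle of length three, all sides simple edges). -/
def IsTriangle (G : Multigraph V) (a b c : V) : Prop :=
  a ≠ b ∧ a ≠ c ∧ b ≠ c ∧ G.mult a b = 1 ∧ G.mult a c = 1 ∧ G.mult b c = 1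

/-- A trumpet: a triangle whose side `ab` is a multiple edge. -/
def IsTrumpet (G : Multigraph V) (a b c : V) : Prop :=
  a ≠ b ∧ a ≠ c ∧ b ≠ c ∧ G.mult a b = 2 ∧ G.mult a c = 1 ∧ G.mult b c = 1

/-- A digon: two vertices joined by parallel edges. -/
def IsDigon (G : Multigraph V) (u v : V) : Prop := u ≠ v ∧ 2 ≤ G.mult u v

/-- A diamond: an induced `K₄` minus the edge `ad`. -/
def IsDiamond (G : Multigraph V) (a b c d : V) : Prop :=
  a ≠ b ∧ a ≠ c ∧ a ≠ d ∧ b ≠ c ∧ b ≠ d ∧ c ≠ d ∧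
  G.mult a d = 0 ∧ G.mult a b = 1 ∧ G.mult a c = 1 ∧ G.mult b c = 1 ∧
  G.mult b d = 1 ∧ G.mult c d = 1

/-- The vertex sets of the diamonds of `G`. -/
def diamondSets (G : Multigraph V) : Set (Finset V) :=
  {s | ∃ a b c d, s = {a, b, c, d} ∧ G.IsDiamond a b c d}

/-- The number of diamonds of `G`. -/
noncomputable def diamondCount (G : Multigraph V) : ℕ := G.diamondSets.ncard

/-- The vertex sets of the digons of `G` that are not the multiple side of a trumpet. -/
def digonSets (G : Multigraph V) : Set (Finset V) :=
  {s | ∃ u v, s = {u, v} ∧ G.IsDigon u v ∧ ∀ w, ¬ G.IsTrumpet u v w}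

/-- The number of digons of `G` (not counting those inside trumpets). -/
noncomputable def digonCount (G : Multigraph V) : ℕ := G.digonSets.ncard

/-- `G` is (isomorphic to) the simple complete graph `K₄`. -/
def IsK4 (G : Multigraph V) : Prop :=
  Nonempty (G.toSimple ≃g (⊤ : SimpleGraph (Fin 4))) ∧ ∀ u v, G.mult u v ≤ 1

section Bisection
variable [Fintype V]

/-- A bisection: the two parts `B` and `Bᶜ` have the same size. -/
def IsBisection (G : Multigraph V) (B : Finset V) : Prop := B.card = Bᶜ.card

/-- The number of monochromatic edges inside the part `B` (with multiplicity). -/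
def monoEdges (G : Multigraph V) (B : Finset V) : ℕ :=
  (∑ u ∈ B, ∑ v ∈ B, G.mult u v) / 2

/-- The total number of monochromatic edges of the bisection `(B, Bᶜ)`. -/
def epsilon (G : Multigraph V) (B : Finset V) : ℕ := G.monoEdges B + G.monoEdges Bᶜ

/-- The simple graph induced by `G` on the part `B`. -/
def inducedSimple (G : Multigraph V) (B : Finset V) : SimpleGraph V where
  Adj u v := u ≠ v ∧ u ∈ B ∧ v ∈ B ∧ 0 < G.mult u v
  symm := ⟨fun u v h => ⟨h.1.symm, h.2.2.1, h.2.1, by rw [G.symm v u]; exact h.2.2.2⟩⟩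
  loopless := ⟨fun v h => h.1 rfl⟩

/-- Every monochromatic component inside `B` has at most `k` vertices. -/
def SmallComponents (G : Multigraph V) (B : Finset V) (k : ℕ) : Prop :=
  ∀ v ∈ B, {u | (G.inducedSimple B).Reachable v u}.ncard ≤ k

/-- A `k`-bisection. -/
def IsKBisection (G : Multigraph V) (B : Finset V) (k : ℕ) : Prop :=
  G.IsBisection B ∧ G.SmallComponents B k ∧ G.SmallComponents Bᶜ k

/-- A desired bisection: (DB1) exactly one monochromatic edge per triangle, (DB2) every
monochromatic edge lies in a triangle, (DB3) exactly one monochromatic edge per diamond,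
(DB4) no multiple edge is monochromatic. -/
def IsDesired (G : Multigraph V) (B : Finset V) : Prop :=
  G.IsBisection B ∧
  (∀ a b c, G.IsTriangle a b c →
    (({(a, b), (a, c), (b, c)} : Finset (V × V)).filter
      (fun e => e.1 ∈ B ↔ e.2 ∈ B)).card = 1) ∧
  (∀ u v, G.Adj u v → (u ∈ B ↔ v ∈ B) → ∃ w, G.IsTriangle u v w) ∧
  (∀ a b c d, G.IsDiamond a b c d →
    (({(a, b), (a, c), (b, c), (b, d), (c, d)} : Finset (V × V)).filter
      (fun e => e.1 ∈ B ↔ e.2 ∈ B)).card = 1) ∧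
  (∀ u v, 2 ≤ G.mult u v → ¬ (u ∈ B ↔ v ∈ B))

end Bisection

end Multigraph

namespace Multigraph

variable {V : Type*} [DecidableEq V]

/-- Delete all edges between `x` and `y`. -/
def deleteEdge (G : Multigraph V) (x y : V) : Multigraph V where
  mult u v := if (u = x ∧ v = y) ∨ (u = y ∧ v = x) then 0 else G.mult u v
  symm := by
    intro u v
    have hsy := G.symm u v
    by_cases h : (u = x ∧ v = y) ∨ (u = y ∧ v = x)
    · have h' : (v = x ∧ u = y) ∨ (v = y ∧ u = x) := by tauto
      simp [h, h']
    · have h' : ¬ ((v = x ∧ u = y) ∨ (v = y ∧ u = x)) := by tauto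
      simp [h, h', hsy]
  loopless := by
    intro v
    by_cases h : (v = x ∧ v = y) ∨ (v = y ∧ v = x) <;> simp [h, G.loopless]

/-- The diamond reduction: delete the diamond vertices `a b c d` and add one new edge
between the outside neighbours `x` and `y`. -/
def diamondReduce (G : Multigraph V) (a b c d x y : V) :
    Multigraph {v : V // v ∉ ({a, b, c, d} : Finset V)} where
  mult u v := if u.1 ≠ v.1 ∧ ((u.1 = x ∧ v.1 = y) ∨ (u.1 = y ∧ v.1 = x))
    then G.mult u.1 v.1 + 1 else G.mult u.1 v.1
  symm := by
    intro u v
    have hsy := G.symm u.1 v.1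
    by_cases h : u.1 ≠ v.1 ∧ ((u.1 = x ∧ v.1 = y) ∨ (u.1 = y ∧ v.1 = x))
    · have h' : v.1 ≠ u.1 ∧ ((v.1 = x ∧ u.1 = y) ∨ (v.1 = y ∧ u.1 = x)) := by tauto
      simp [h, h', hsy]
    · have h' : ¬ (v.1 ≠ u.1 ∧ ((v.1 = x ∧ u.1 = y) ∨ (v.1 = y ∧ u.1 = x))) := by tauto
      simp [h, h', hsy]
  loopless := by
    intro v
    simp [G.loopless]

/-- A ring of two diamonds: two vertex-disjoint diamonds covering all of `V`, joined
cyclically by two edges between their degree-2 vertices. -/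
def IsRingOfTwoDiamonds (G : Multigraph V) : Prop :=
  ∃ a₁ b₁ c₁ d₁ a₂ b₂ c₂ d₂ : V,
    ([a₁, b₁, c₁, d₁, a₂, b₂, c₂, d₂] : List V).Nodup ∧
    (∀ v : V, v ∈ [a₁, b₁, c₁, d₁, a₂, b₂, c₂, d₂]) ∧
    G.IsDiamond a₁ b₁ c₁ d₁ ∧ G.IsDiamond a₂ b₂ c₂ d₂ ∧
    G.mult d₁ a₂ = 1 ∧ G.mult d₂ a₁ = 1

end Multigraph

/-! In a cubic multigraph, an inner vertex `b` of a diamond `a b c d` has its three edges going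
to `a`, `c` and `d`, so the vertex set of the diamond is the closed neighbourhood of either inner
vertex. Two diamonds sharing a vertex also share an inner vertex, since the shared vertex has at
most three neighbours; hence the two diamonds coincide. -/

namespace Multigraph

open Finset

variable {V : Type*} {G : Multigraph V}

namespace IsDiamond

variable {a b c d : V}

lemma swap_inner (h : G.IsDiamond a b c d) : G.IsDiamond a c b d := by
  obtain ⟨hab, hac, had, hbc, hbd, hcd, mad, mab, mac, mbc, mbd, mcd⟩ := h
  exact ⟨hac, hab, had, hbc.symm, hcd, hbd, mad, mac, mab, G.symm b c ▸ mbc, mcd, mbd⟩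

lemma swap_outer (h : G.IsDiamond a b c d) : G.IsDiamond d b c a := by
  obtain ⟨hab, hac, had, hbc, hbd, hcd, mad, mab, mac, mbc, mbd, mcd⟩ := h
  exact ⟨hbd.symm, hcd.symm, had.symm, hbc, hab.symm, hac.symm, G.symm a d ▸ mad,
    G.symm b d ▸ mbd, G.symm c d ▸ mcd, mbc, G.symm a b ▸ mab, G.symm a c ▸ mac⟩

end IsDiamond

section Nbhd

variable [Fintype V]

def nbhd (G : Multigraph V) (v : V) : Finset V := univ.filter fun u => 0 < G.mult v u

lemma card_nbhd_le_degree (G : Multigraph V) (v : V) : #(G.nbhd v) ≤ G.degree v :=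
  calc #(G.nbhd v) = ∑ _u ∈ G.nbhd v, 1 := card_eq_sum_ones _
    _ ≤ ∑ u ∈ G.nbhd v, G.mult v u := sum_le_sum fun _u hu => (mem_filter.1 hu).2
    _ ≤ G.degree v := sum_le_sum_of_subset (subset_univ _)

end Nbhd

variable [DecidableEq V]

lemma exists_isDiamond_of_mem_diamondSets {s : Finset V} {v : V} (hs : s ∈ G.diamondSets)
    (hv : v ∈ s) : ∃ a b c d, s = {a, b, c, d} ∧ G.IsDiamond a b c d ∧ (v = a ∨ v = b) := by
  obtain ⟨a, b, c, d, rfl, h⟩ := hs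
  simp only [mem_insert, mem_singleton] at hv
  rcases hv with rfl | rfl | rfl | rfl
  · exact ⟨v, b, c, d, rfl, h, .inl rfl⟩
  · exact ⟨a, v, c, d, rfl, h, .inr rfl⟩
  · exact ⟨a, v, b, d, by rw [insert_comm v b], h.swap_inner, .inr rfl⟩
  · refine ⟨v, b, c, a, ?_, h.swap_outer, .inl rfl⟩
    ext; simp only [mem_insert, mem_singleton]; tauto

variable [Fintype V]

lemma nbhd_eq_of_mult_eq_one {v x y z : V} (hdeg : G.degree v = 3) (hxy : x ≠ y) (hxz : x ≠ z)
    (hyz : y ≠ z) (hx : G.mult v x = 1) (hy : G.mult v y = 1) (hz : G.mult v z = 1) :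
    G.nbhd v = {x, y, z} := by
  have hsum : ∑ u ∈ {x, y, z}, G.mult v u = 3 := by
    rw [sum_insert (by simp [hxy, hxz]), sum_insert (by simp [hyz]), sum_singleton, hx, hy, hz]
    rfl
  have hrest : ∑ u ∈ univ \ {x, y, z}, G.mult v u = 0 := by
    have := sum_sdiff (f := G.mult v) (subset_univ {x, y, z})
    rw [hsum] at this
    unfold degree at hdeg
    omega
  ext u
  simp only [nbhd, mem_filter, mem_univ, true_and]
  constructor
  · intro hu
    by_contra hu'
    exact hu.ne' (sum_eq_zero_iff.1 hrest u (mem_sdiff.2 ⟨mem_univ u, hu'⟩))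
  · simp only [mem_insert, mem_singleton]
    rintro (rfl | rfl | rfl) <;> omega

namespace IsDiamond

variable {a b c d : V}

lemma nbhd_inner (hcubic : G.IsCubic) (h : G.IsDiamond a b c d) : G.nbhd b = {a, c, d} := by
  obtain ⟨hab, hac, had, hbc, hbd, hcd, -, mab, -, mbc, mbd, -⟩ := h
  exact nbhd_eq_of_mult_eq_one (hcubic b) hac had hcd (G.symm b a ▸ mab) mbc mbd

lemma insert_nbhd_eq (hcubic : G.IsCubic) (h : G.IsDiamond a b c d) {w : V}
    (hw : w = b ∨ w = c) : insert w (G.nbhd w) = {a, b, c, d} := by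
  rcases hw with rfl | rfl
  · rw [h.nbhd_inner hcubic, insert_comm]
  · rw [h.swap_inner.nbhd_inner hcubic]
    ext; simp only [mem_insert, mem_singleton]; tauto

/-- If an inner vertex `b` of one diamond is an outer vertex of another, then the two other
neighbours `b'`, `c'` of `b` in the second diamond are adjacent, so they cannot be the
non-adjacent pair `a`, `d`; one of them is the other inner vertex `c`. -/
lemma inner_eq_of_outer_eq_inner (hcubic : G.IsCubic) (h : G.IsDiamond a b c d)
    {b' c' d' : V} (h' : G.IsDiamond b b' c' d') : c = b' ∨ c = c' := by
  have hnbhd := h.nbhd_inner hcubic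
  obtain ⟨-, -, -, -, -, -, mad, -⟩ := h
  obtain ⟨-, -, -, hbc', -, -, -, mbb', mbc', mb'c', -, -⟩ := h'
  have hb' : b' ∈ G.nbhd b := mem_filter.2 ⟨mem_univ _, by omega⟩
  have hc' : c' ∈ G.nbhd b := mem_filter.2 ⟨mem_univ _, by omega⟩
  simp only [hnbhd, mem_insert, mem_singleton] at hb' hc'
  rcases hb' with rfl | rfl | rfl <;> rcases hc' with rfl | rfl | rfl <;>
    first
    | exact .inl rfl
    | exact .inr rfl
    | exact (hbc' rfl).elim
    | omega
    | (rw [G.symm] at mb'c'; omega)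

lemma inner_eq_of_outer_eq (hcubic : G.IsCubic) (h : G.IsDiamond a b c d)
    {b' c' d' : V} (h' : G.IsDiamond a b' c' d') : b' = b ∨ b' = c ∨ c' = b ∨ c' = c := by
  obtain ⟨-, -, -, hbc, -, -, -, mab, mac, -⟩ := h
  obtain ⟨-, -, -, hbc', -, -, -, mab', mac', -⟩ := h'
  by_contra! ⟨hb'b, hb'c, hc'b, hc'c⟩
  have hsub : ({b, c, b', c'} : Finset V) ⊆ G.nbhd a := by
    intro u hu
    simp only [mem_insert, mem_singleton] at hu
    refine mem_filter.2 ⟨mem_univ _, ?_⟩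
    rcases hu with rfl | rfl | rfl | rfl <;> omega
  have hcard : #({b, c, b', c'} : Finset V) = 4 := by
    rw [card_insert_of_notMem (by simp [hbc, hb'b.symm, hc'b.symm]),
      card_insert_of_notMem (by simp [hb'c.symm, hc'c.symm]), card_pair hbc']
  have := (card_le_card hsub).trans (G.card_nbhd_le_degree a)
  rw [hcard, hcubic a] at this
  omega

lemma exists_common_inner (hcubic : G.IsCubic) {a' b' c' d' v : V} (h : G.IsDiamond a b c d)
    (h' : G.IsDiamond a' b' c' d') (hv : v = a ∨ v = b) (hv' : v = a' ∨ v = b') :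
    ∃ w, (w = b ∨ w = c) ∧ (w = b' ∨ w = c') := by
  rcases hv with rfl | rfl <;> rcases hv' with rfl | rfl
  · rcases h.inner_eq_of_outer_eq hcubic h' with rfl | rfl | rfl | rfl
    exacts [⟨_, .inl rfl, .inl rfl⟩, ⟨_, .inr rfl, .inl rfl⟩,
      ⟨_, .inl rfl, .inr rfl⟩, ⟨_, .inr rfl, .inr rfl⟩]
  · exact ⟨c', h'.inner_eq_of_outer_eq_inner hcubic h, .inr rfl⟩
  · exact ⟨c, .inr rfl, h.inner_eq_of_outer_eq_inner hcubic h'⟩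
  · exact ⟨v, .inl rfl, .inl rfl⟩

end IsDiamond

end Multigraph

theorem stmt3_general {V : Type*} [Fintype V] [DecidableEq V] (G : Multigraph V)
    (hcubic : G.IsCubic) :
    ∀ s ∈ G.diamondSets, ∀ t ∈ G.diamondSets, s ≠ t → Disjoint s t := by
  intro s hs t ht hne
  refine Finset.disjoint_left.2 fun v hvs hvt => hne ?_
  obtain ⟨a, b, c, d, rfl, h, hv⟩ := Multigraph.exists_isDiamond_of_mem_diamondSets hs hvs
  obtain ⟨a', b', c', d', rfl, h', hv'⟩ := Multigraph.exists_isDiamond_of_mem_diamondSets ht hvt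
  obtain ⟨w, hw, hw'⟩ := h.exists_common_inner hcubic h' hv hv'
  rw [← h.insert_nbhd_eq hcubic hw, ← h'.insert_nbhd_eq hcubic hw']

/-- In a connected claw-free cubic multigraph that is not `K₄`, any two
distinct diamonds are vertex-disjoint. -/
theorem stmt3 {V : Type*} [Fintype V] [DecidableEq V] (G : Multigraph V)
    (hconn : G.Connected) (hclaw : G.IsClawFree) (hcubic : G.IsCubic)
    (hK4 : ¬ G.IsK4) :
    ∀ s ∈ G.diamondSets, ∀ t ∈ G.diamondSets, s ≠ t → Disjoint s t :=
  stmt3_general G hcubic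
end

section
/- A connected cubic multigraph is claw-free if and only if every vertex belongs to a triangle, a trumpet, or a digon. -/
/-
At a vertex `v` of degree three, lying on a triangle, trumpet or digon is exactly the negation of
being the centre of a claw. If `v` lies on no digon, its three edges go to three distinct
neighbours; if no two of them are adjacent they form a claw, and otherwise the edge between two
of them is simple or double (the degree bound leaves no room for more), giving a triangle or a
trumpet. Conversely the centre of a claw has exactly its three leaves as neighbours, each by a
simple edge and pairwise non-adjacent, so it lies on no triangle, trumpet or digon.
-/

namespace Multigraph

section

variable {V : Type*} (G : Multigraph V)

def IsClawCentre (c : V) : Prop :=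
  ∃ a b d : V, c ≠ a ∧ c ≠ b ∧ c ≠ d ∧ a ≠ b ∧ a ≠ d ∧ b ≠ d ∧
    G.mult c a = 1 ∧ G.mult c b = 1 ∧ G.mult c d = 1 ∧
    G.mult a b = 0 ∧ G.mult a d = 0 ∧ G.mult b d = 0

def InTriangleTrumpetOrDigon (v : V) : Prop :=
  (∃ a b, G.IsTriangle v a b) ∨ (∃ a b, G.IsTrumpet v a b ∨ G.IsTrumpet a b v) ∨
    ∃ u, G.IsDigon v u

theorem isClawFree_iff [DecidableEq V] : G.IsClawFree ↔ ∀ c, ¬ G.IsClawCentre c :=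
  not_exists

variable {G}

theorem ne_of_mult_pos {u v : V} (h : 0 < G.mult u v) : u ≠ v := by
  rintro rfl
  simp [G.loopless] at h

end

open Finset

variable {V : Type*} [Fintype V] (G : Multigraph V)

theorem sum_mult_le_degree (v : V) (s : Finset V) : ∑ u ∈ s, G.mult v u ≤ G.degree v :=
  sum_le_sum_of_subset (subset_univ s)

variable {G}

theorem degree_eq_card_of_mult_le_one {v : V} (h : ∀ u, G.mult v u ≤ 1) :
    G.degree v = #{u | G.mult v u = 1} := by
  rw [degree, card_filter]
  refine sum_congr rfl fun u _ => ?_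
  have := h u
  split_ifs <;> omega

variable [DecidableEq V] (G)

theorem mult_add_mult_le_degree (v : V) {x y : V} (hxy : x ≠ y) :
    G.mult v x + G.mult v y ≤ G.degree v := by
  simpa [sum_pair hxy] using G.sum_mult_le_degree v {x, y}

variable {G}

theorem exists_three_simple_neighbours {v : V} (hv : G.degree v = 3)
    (h : ∀ u, G.mult v u ≤ 1) :
    ∃ a b d, a ≠ b ∧ a ≠ d ∧ b ≠ d ∧ G.mult v a = 1 ∧ G.mult v b = 1 ∧ G.mult v d = 1 := by
  rw [degree_eq_card_of_mult_le_one h, card_eq_three] at hv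
  obtain ⟨a, b, d, hab, had, hbd, hN⟩ := hv
  have hmem : ∀ x ∈ ({a, b, d} : Finset V), G.mult v x = 1 := fun x hx => by
    rw [← hN] at hx
    simpa using hx
  exact ⟨a, b, d, hab, had, hbd, hmem a (by simp), hmem b (by simp), hmem d (by simp)⟩

theorem eq_of_mult_pos_of_three_simple_neighbours {c a b d : V} (hc : G.degree c ≤ 3)
    (hab : a ≠ b) (had : a ≠ d) (hbd : b ≠ d)
    (ha : G.mult c a = 1) (hb : G.mult c b = 1) (hd : G.mult c d = 1)
    {u : V} (hu : 0 < G.mult c u) : u = a ∨ u = b ∨ u = d := by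
  by_contra! hne
  obtain ⟨hua, hub, hud⟩ := hne
  have hsum := G.sum_mult_le_degree c {a, b, d, u}
  rw [sum_insert (by simp [hab, had, hua.symm]), sum_insert (by simp [hbd, hub.symm]),
    sum_pair hud.symm] at hsum
  omega

theorem isTriangle_or_isTrumpet {v a b : V} (ha : G.degree a ≤ 3)
    (hva : G.mult v a = 1) (hvb : G.mult v b = 1) (hab : a ≠ b) (hpos : 0 < G.mult a b) :
    G.IsTriangle v a b ∨ G.IsTrumpet a b v := by
  have hvna : v ≠ a := ne_of_mult_pos (hva ▸ one_pos)
  have hvnb : v ≠ b := ne_of_mult_pos (hvb ▸ one_pos)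
  have hav : G.mult a v = 1 := G.symm a v ▸ hva
  have hbv : G.mult b v = 1 := G.symm b v ▸ hvb
  -- `ab` is at most a double edge, as `a` has degree at most three and an edge to `v`
  have hle := G.mult_add_mult_le_degree a hvnb
  rcases Nat.lt_or_ge (G.mult a b) 2 with h | h
  · exact Or.inl ⟨hvna, hvnb, hab, hva, hvb, by omega⟩
  · exact Or.inr ⟨hab, hvna.symm, hvnb.symm, by omega, hav, hbv⟩

theorem IsClawCentre.not_inTriangleTrumpetOrDigon {c : V} (hc : G.degree c ≤ 3)
    (h : G.IsClawCentre c) : ¬ G.InTriangleTrumpetOrDigon c := by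
  obtain ⟨a, b, d, -, -, -, hab, had, hbd, ha, hb, hd, zab, zad, zbd⟩ := h
  have hnbr : ∀ p, 0 < G.mult c p → p = a ∨ p = b ∨ p = d := fun p =>
    eq_of_mult_pos_of_three_simple_neighbours hc hab had hbd ha hb hd
  have := G.symm a b
  have := G.symm a d
  have := G.symm b d
  rintro (⟨p, q, -, -, hpq, hp, hq, hpq'⟩ | ⟨p, q, ⟨-, -, -, hp, -, -⟩ | ⟨hpq, -, -, hpq', hp, hq⟩⟩ |
    ⟨u, -, hu⟩)
  · rcases hnbr p (by omega) with rfl | rfl | rfl <;> rcases hnbr q (by omega) with rfl | rfl | rfl <;>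
      first | exact hpq rfl | omega
  · rcases hnbr p (by omega) with rfl | rfl | rfl <;> omega
  · rw [G.symm] at hp hq
    rcases hnbr p (by omega) with rfl | rfl | rfl <;> rcases hnbr q (by omega) with rfl | rfl | rfl <;>
      first | exact hpq rfl | omega
  · rcases hnbr u (by omega) with rfl | rfl | rfl <;> omega

theorem isClawCentre_of_not_inTriangleTrumpetOrDigon {v : V} (hv : G.degree v = 3)
    (hdeg : ∀ u, G.degree u ≤ 3) (h : ¬ G.InTriangleTrumpetOrDigon v) : G.IsClawCentre v := by
  simp only [InTriangleTrumpetOrDigon, not_or, not_exists] at h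
  obtain ⟨htri, htrumpet, hdigon⟩ := h
  have hsimple : ∀ u, G.mult v u ≤ 1 := fun u => by
    by_contra! hu
    exact hdigon u ⟨ne_of_mult_pos (Nat.zero_lt_of_lt hu), hu⟩
  have hnonadj : ∀ a b, G.mult v a = 1 → G.mult v b = 1 → a ≠ b → G.mult a b = 0 :=
    fun a b ha hb hab => by
      by_contra! hpos
      rcases isTriangle_or_isTrumpet (hdeg a) ha hb hab (Nat.pos_of_ne_zero hpos) with ht | ht
      exacts [htri a b ht, (htrumpet a b).2 ht]
  obtain ⟨a, b, d, hab, had, hbd, ha, hb, hd⟩ := exists_three_simple_neighbours hv hsimple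
  exact ⟨a, b, d, ne_of_mult_pos (ha ▸ one_pos), ne_of_mult_pos (hb ▸ one_pos),
    ne_of_mult_pos (hd ▸ one_pos),
    hab, had, hbd, ha, hb, hd, hnonadj a b ha hb hab, hnonadj a d ha hd had, hnonadj b d hb hd hbd⟩

theorem not_isClawCentre_iff {v : V} (hv : G.degree v = 3) (hdeg : ∀ u, G.degree u ≤ 3) :
    ¬ G.IsClawCentre v ↔ G.InTriangleTrumpetOrDigon v :=
  ⟨Not.imp_symm (isClawCentre_of_not_inTriangleTrumpetOrDigon hv hdeg),
    fun h hc => hc.not_inTriangleTrumpetOrDigon hv.le h⟩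

end Multigraph

theorem stmt5_general {V : Type*} [Fintype V] [DecidableEq V] (G : Multigraph V)
    (hcubic : G.IsCubic) :
    G.IsClawFree ↔
      ∀ v : V, (∃ a b, G.IsTriangle v a b) ∨
        (∃ a b, G.IsTrumpet v a b ∨ G.IsTrumpet a b v) ∨
        (∃ u, G.IsDigon v u) := by
  rw [G.isClawFree_iff]
  exact forall_congr' fun v => Multigraph.not_isClawCentre_iff (hcubic v) fun u => (hcubic u).le

/-- A connected cubic multigraph is claw-free iff every vertex belongs to a
triangle, a trumpet or a digon. -/
theorem stmt5 {V : Type*} [Fintype V] [DecidableEq V] (G : Multigraph V)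
    (hconn : G.Connected) (hcubic : G.IsCubic) :
    G.IsClawFree ↔
      ∀ v : V, (∃ a b, G.IsTriangle v a b) ∨
        (∃ a b, G.IsTrumpet v a b ∨ G.IsTrumpet a b v) ∨
        (∃ u, G.IsDigon v u) :=
  stmt5_general G hcubic
end

section
/- Every desired bisection of a connected claw-free cubic multigraph (not isomorphic to K4) is a 2-bisection. -/
/-! No vertex `v` has two neighbours `u`, `w` of its own colour: both edges are simple (DB4)
and lie in triangles (DB2); the edge `uw` cannot be present (DB1, DB4), so by cubicity the two
triangles share their third vertex `t`, and `u v t w` is a diamond with two monochromatic edges,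
against (DB3). Hence every monochromatic component is a vertex or an edge. -/

theorem SimpleGraph.eq_or_adj_of_reachable {V : Type*} {H : SimpleGraph V}
    (hH : ∀ x y z, H.Adj x y → H.Adj x z → y = z) {a b : V} (hab : H.Reachable a b) :
    b = a ∨ H.Adj a b := by
  obtain ⟨p⟩ := hab
  induction p with
  | nil => exact Or.inl rfl
  | cons hac _ ih =>
    rcases ih with rfl | hcb
    · exact Or.inr hac
    · exact Or.inl (hH _ _ _ hcb hac.symm)

theorem SimpleGraph.ncard_setOf_reachable_le_two {V : Type*} {H : SimpleGraph V}
    (hH : ∀ x y z, H.Adj x y → H.Adj x z → y = z) (v : V) :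
    {u | H.Reachable v u}.ncard ≤ 2 := by
  have hsub : {u | H.Reachable v u} ⊆ insert v {u | H.Adj v u} := fun u hu =>
    (H.eq_or_adj_of_reachable hH hu).imp id id
  have hnbr : {u | H.Adj v u}.Subsingleton := fun _ ha _ hb => hH v _ _ ha hb
  calc {u | H.Reachable v u}.ncard ≤ (insert v {u | H.Adj v u}).ncard :=
        Set.ncard_le_ncard hsub (hnbr.finite.insert v)
    _ ≤ {u | H.Adj v u}.ncard + 1 := Set.ncard_insert_le _ _
    _ ≤ 2 := by have := (Set.ncard_le_one hnbr.finite).mpr hnbr; omega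

namespace Multigraph

variable {V : Type*} {G : Multigraph V}

theorem card_le_degree [Fintype V] [DecidableEq V] (G : Multigraph V) {v : V} {S : Finset V}
    (hS : ∀ x ∈ S, 0 < G.mult v x) : S.card ≤ G.degree v :=
  calc S.card = ∑ _ ∈ S, 1 := Finset.card_eq_sum_ones S
    _ ≤ ∑ x ∈ S, G.mult v x := Finset.sum_le_sum hS
    _ ≤ G.degree v := Finset.sum_le_sum_of_subset (Finset.subset_univ S)

theorem smallComponents_two {P : Finset V}
    (hP : ∀ v u w, v ∈ P → u ∈ P → w ∈ P → G.Adj v u → G.Adj v w → u = w) :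
    G.SmallComponents P 2 := fun v _ =>
  SimpleGraph.ncard_setOf_reachable_le_two (H := G.inducedSimple P)
    (fun _ _ _ hxy hxz => hP _ _ _ hxy.2.1 hxy.2.2.1 hxz.2.2.1 ⟨hxy.1, hxy.2.2.2⟩
      ⟨hxz.1, hxz.2.2.2⟩) v

namespace IsDesired

variable [Fintype V] [DecidableEq V] {B : Finset V} (hdes : G.IsDesired B)
include hdes

theorem mult_eq_one {u v : V} (huv : G.Adj u v) (hmono : u ∈ B ↔ v ∈ B) :
    G.mult u v = 1 := by
  have := huv.2
  by_contra h
  exact hdes.2.2.2.2 u v (by omega) hmono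

theorem not_isTriangle {v u w : V} (htri : G.IsTriangle v u w)
    (hu : v ∈ B ↔ u ∈ B) (hw : v ∈ B ↔ w ∈ B) : False := by
  have hcard := hdes.2.1 v u w htri
  have htwo : 1 < (({(v, u), (v, w), (u, w)} : Finset (V × V)).filter
      (fun e => e.1 ∈ B ↔ e.2 ∈ B)).card :=
    Finset.one_lt_card.mpr ⟨(v, u), by simp [hu], (v, w), by simp [hw], by simp [htri.2.2.1]⟩
  omega

theorem not_isDiamond {a b c d : V} (hdia : G.IsDiamond a b c d)
    (hab : a ∈ B ↔ b ∈ B) (hbd : b ∈ B ↔ d ∈ B) : False := by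
  have hcard := hdes.2.2.2.1 a b c d hdia
  have htwo : 1 < (({(a, b), (a, c), (b, c), (b, d), (c, d)} : Finset (V × V)).filter
      (fun e => e.1 ∈ B ↔ e.2 ∈ B)).card :=
    Finset.one_lt_card.mpr ⟨(a, b), by simp [hab], (b, d), by simp [hbd], by simp [hdia.1]⟩
  omega

theorem eq_of_adj_of_adj (hcubic : G.IsCubic) {v u w : V} (hvu : G.Adj v u) (hvw : G.Adj v w)
    (hu : v ∈ B ↔ u ∈ B) (hw : v ∈ B ↔ w ∈ B) : u = w := by
  by_contra huw
  obtain ⟨t, -, hvt, hut, -, hvtm, hutm⟩ := hdes.2.2.1 v u hvu hu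
  obtain ⟨s, -, hvs, hws, -, hvsm, hwsm⟩ := hdes.2.2.1 v w hvw hw
  have huw0 : G.mult u w = 0 := by
    by_contra h
    have huw1 := hdes.mult_eq_one ⟨huw, Nat.pos_of_ne_zero h⟩ (hu.symm.trans hw)
    exact hdes.not_isTriangle ⟨hvu.1, hvw.1, huw, hdes.mult_eq_one hvu hu,
      hdes.mult_eq_one hvw hw, huw1⟩ hu hw
  have htw : t ≠ w := by rintro rfl; omega
  have hsu : s ≠ u := by rintro rfl; rw [G.symm] at huw0; omega
  have hst : s = t := by
    by_contra hst
    have hvu0 := hvu.2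
    have hvw0 := hvw.2
    have h4 : ({u, w, t, s} : Finset V).card = 4 := by
      simp [huw, hut, hws, Ne.symm hsu, Ne.symm htw, Ne.symm hst]
    have hle := G.card_le_degree (v := v) (S := {u, w, t, s}) (by
      simp only [Finset.mem_insert, Finset.mem_singleton]
      rintro x (rfl | rfl | rfl | rfl) <;> omega)
    have := hcubic v
    omega
  subst hst
  refine hdes.not_isDiamond (a := u) (b := v) (c := s) (d := w)
    ⟨hvu.1.symm, hut, huw, hvs, hvw.1, htw, huw0, ?_, hutm, hvsm,
      hdes.mult_eq_one hvw hw, by rw [G.symm]; exact hwsm⟩ hu.symm hw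
  rw [G.symm]; exact hdes.mult_eq_one hvu hu

end IsDesired

end Multigraph

theorem stmt6_general {V : Type*} [Fintype V] [DecidableEq V] (G : Multigraph V)
    (hcubic : G.IsCubic) (B : Finset V) (hdes : G.IsDesired B) :
    G.IsKBisection B 2 := by
  refine ⟨hdes.1, G.smallComponents_two ?_, G.smallComponents_two ?_⟩
  · exact fun v u w hv hu hw hvu hvw =>
      hdes.eq_of_adj_of_adj hcubic hvu hvw (iff_of_true hv hu) (iff_of_true hv hw)
  · simp only [Finset.mem_compl]
    exact fun v u w hv hu hw hvu hvw =>
      hdes.eq_of_adj_of_adj hcubic hvu hvw (iff_of_false hv hu) (iff_of_false hv hw)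

/-- A desired bisection of a connected claw-free cubic multigraph that is not
`K₄` is a 2-bisection. -/
theorem stmt6 {V : Type*} [Fintype V] [DecidableEq V] (G : Multigraph V)
    (hconn : G.Connected) (hclaw : G.IsClawFree) (hcubic : G.IsCubic)
    (hK4 : ¬ G.IsK4) (B : Finset V) (hdes : G.IsDesired B) :
    G.IsKBisection B 2 :=
  stmt6_general G hcubic B hdes
end

section
/- Let G be a connected claw-free cubic multigraph different from K4, containing a diamond on vertices a,b,c,d with ad not an edge, and let x, y be the outside neighbours of a and d. Then the pair of edges {xa, dy} is an edge-cut of G. -/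
/-!
Inside a cubic graph, the four vertices of a diamond `a b c d` already use up all degree
except one edge at `a` and one at `d`. So the only edges leaving `{a, b, c, d}` are `ax`
and `dy`, and once they are deleted no walk can get from `a` to the outside vertex `x`.
-/

namespace Multigraph

variable {V : Type*}

theorem not_connected_of_mult_eq_zero (H : Multigraph V) (S : Set V) {u v : V}
    (hu : u ∈ S) (hv : v ∉ S) (hS : ∀ p ∈ S, ∀ q ∉ S, H.mult p q = 0) :
    ¬ H.Connected := by
  intro hconn
  obtain ⟨walk⟩ := hconn.preconnected u v
  obtain ⟨⟨⟨p, q⟩, hpq⟩, -, hp, hq⟩ := walk.exists_boundary_dart S hu hv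
  exact hpq.2.ne' (hS p hp q hq)

section DeleteEdge

variable [DecidableEq V] (G : Multigraph V) (x y : V)

theorem mult_deleteEdge_le (u v : V) : (G.deleteEdge x y).mult u v ≤ G.mult u v := by
  simp only [deleteEdge]
  split_ifs <;> simp

theorem mult_deleteEdge_self : (G.deleteEdge x y).mult x y = 0 := by
  simp [deleteEdge]

theorem mult_deleteEdge_swap : (G.deleteEdge x y).mult y x = 0 := by
  simp [deleteEdge]

end DeleteEdge

variable [Fintype V] [DecidableEq V] {G : Multigraph V}

theorem eq_or_eq_or_eq_of_mult_pos {u p q r v : V} (hu : G.degree u ≤ 3)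
    (hpq : p ≠ q) (hpr : p ≠ r) (hqr : q ≠ r)
    (hp : 0 < G.mult u p) (hq : 0 < G.mult u q) (hr : 0 < G.mult u r)
    (hv : 0 < G.mult u v) : v = p ∨ v = q ∨ v = r := by
  by_contra! hne
  obtain ⟨hvp, hvq, hvr⟩ := hne
  have hsub : ∑ w ∈ ({v, p, q, r} : Finset V), G.mult u w ≤ G.degree u :=
    Finset.sum_le_sum_of_subset (Finset.subset_univ _)
  rw [Finset.sum_insert (by simp [hvp, hvq, hvr]), Finset.sum_insert (by simp [hpq, hpr]),
    Finset.sum_insert (by simp [hqr]), Finset.sum_singleton] at hsub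
  omega

theorem IsDiamond.eq_of_mult_pos_of_notMem (hcubic : G.IsCubic) {a b c d x y : V}
    (hdiam : G.IsDiamond a b c d)
    (hx : 0 < G.mult a x) (hxo : x ∉ ({a, b, c, d} : Finset V))
    (hy : 0 < G.mult d y) (hyo : y ∉ ({a, b, c, d} : Finset V))
    {u v : V} (hu : u ∈ ({a, b, c, d} : Finset V)) (hv : v ∉ ({a, b, c, d} : Finset V))
    (huv : 0 < G.mult u v) : (u = a ∧ v = x) ∨ (u = d ∧ v = y) := by
  obtain ⟨hab, hac, had, hbc, hbd, hcd, -, mab, mac, mbc, mbd, mcd⟩ := hdiam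
  have mba : G.mult b a = 1 := G.symm b a ▸ mab
  have mca : G.mult c a = 1 := G.symm c a ▸ mac
  have mcb : G.mult c b = 1 := G.symm c b ▸ mbc
  have mdb : G.mult d b = 1 := G.symm d b ▸ mbd
  have mdc : G.mult d c = 1 := G.symm d c ▸ mcd
  simp only [Finset.mem_insert, Finset.mem_singleton, not_or] at hu hv hxo hyo
  have hdeg : ∀ w, G.degree w ≤ 3 := fun w => (hcubic w).le
  rcases hu with rfl | rfl | rfl | rfl
  · rcases eq_or_eq_or_eq_of_mult_pos (hdeg u) hbc (Ne.symm hxo.2.1) (Ne.symm hxo.2.2.1)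
      (by omega) (by omega) hx huv with h | h | h <;> tauto
  · rcases eq_or_eq_or_eq_of_mult_pos (hdeg u) hac had hcd (by omega) (by omega) (by omega)
      huv with h | h | h <;> tauto
  · rcases eq_or_eq_or_eq_of_mult_pos (hdeg u) hab had hbd (by omega) (by omega) (by omega)
      huv with h | h | h <;> tauto
  · rcases eq_or_eq_or_eq_of_mult_pos (hdeg u) hbc (Ne.symm hyo.2.1) (Ne.symm hyo.2.2.1)
      (by omega) (by omega) hy huv with h | h | h <;> tauto

end Multigraph

theorem stmt9_general {V : Type*} [Fintype V] [DecidableEq V] (G : Multigraph V)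
    (hcubic : G.IsCubic)
    (a b c d x y : V) (hdiam : G.IsDiamond a b c d)
    (hx : G.Adj a x) (hxo : x ∉ ({a, b, c, d} : Finset V))
    (hy : G.Adj d y) (hyo : y ∉ ({a, b, c, d} : Finset V)) :
    ¬ ((G.deleteEdge x a).deleteEdge d y).Connected := by
  refine Multigraph.not_connected_of_mult_eq_zero _ ({a, b, c, d} : Finset V)
    (show a ∈ ({a, b, c, d} : Finset V) by simp) hxo fun u hu v hv => ?_
  have hle := Multigraph.mult_deleteEdge_le (G.deleteEdge x a) d y u v
  by_contra hne
  have huv : 0 < G.mult u v :=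
    (Nat.pos_of_ne_zero hne).trans_le (hle.trans (Multigraph.mult_deleteEdge_le ..))
  rcases hdiam.eq_of_mult_pos_of_notMem hcubic hx.2 hxo hy.2 hyo hu hv huv with
    ⟨rfl, rfl⟩ | ⟨rfl, rfl⟩
  · exact hne (Nat.eq_zero_of_le_zero (hle.trans (Multigraph.mult_deleteEdge_swap G v u).le))
  · exact hne (Multigraph.mult_deleteEdge_self _ u v)

/-- The two edges `xa` and `dy` leaving a diamond form an edge-cut. -/
theorem stmt9 {V : Type*} [Fintype V] [DecidableEq V] (G : Multigraph V)
    (hconn : G.Connected) (hclaw : G.IsClawFree) (hcubic : G.IsCubic)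
    (hK4 : ¬ G.IsK4) (a b c d x y : V) (hdiam : G.IsDiamond a b c d)
    (hx : G.Adj a x) (hxo : x ∉ ({a, b, c, d} : Finset V))
    (hy : G.Adj d y) (hyo : y ∉ ({a, b, c, d} : Finset V)) :
    ¬ ((G.deleteEdge x a).deleteEdge d y).Connected :=
  stmt9_general G hcubic a b c d x y hdiam hx hxo hy hyo
end
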